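/- arXiv:2110.04675 — 2 statements merged into one kernel-verified Lean document; each statement's English description precedes it below -/
import Mathlib

section
/- Let n ≥ 1, let H be a Hermitian n×n complex matrix, let E₀ be the smallest eigenvalue of H, and let ρ be a density matrix (a positive semidefinite n×n complex matrix with trace 1). Then the following are equivalent: (i) for every n×n complex matrix A, the trace Tr(ρ · A* · (H·A − A·H)) is a nonnegative real number; (ii) H · ρ = E₀ • ρ (equivalently, the range of ρ is contained in the E₀-eigenspace of H). -/
/-!
Put `K = H - E₀ • 1`. Minimality of `E₀` makes `K` positive semidefinite, and since scalars
commute with everything, `HA - AH = KA - AK`. If `Kρ = 0`, cyclicity turns `Tr(ρ A* A K)` into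
`Tr(Kρ A* A) = 0`, leaving `Tr(ρ · A* K A) ≥ 0`. Conversely, testing the ground state condition
on the rank-one matrices `A = x eᵢ*`, with `x` a ground state vector of `H`, kills the `KA` term and
gives `-‖x‖² (Kρ)ᵢᵢ ≥ 0`; summing over `i`, `Tr(Kρ) ≤ 0`. As a trace of a product of two positive
semidefinite matrices, `Tr(Kρ) ≥ 0`, so it vanishes; writing `K = C*C` and `ρ = D*D`, this
says `Tr((DC*)* (DC*)) = 0`, so `DC* = 0` and hence `Kρ = 0`.
-/

open Matrix
open scoped ComplexOrder

namespace Matrix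

variable {𝕜 n : Type*} [RCLike 𝕜] [Fintype n]

open scoped MatrixOrder in
theorem PosSemidef.exists_eq_conjTranspose_mul_self [DecidableEq n] {A : Matrix n n 𝕜}
    (hA : A.PosSemidef) : ∃ B : Matrix n n 𝕜, A = Bᴴ * B :=
  CStarAlgebra.nonneg_iff_eq_star_mul_self.mp hA.nonneg

theorem PosSemidef.trace_mul_nonneg {A B : Matrix n n 𝕜} (hA : A.PosSemidef)
    (hB : B.PosSemidef) : 0 ≤ (A * B).trace := by
  classical
  obtain ⟨C, rfl⟩ := hA.exists_eq_conjTranspose_mul_self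
  rw [Matrix.mul_assoc, trace_mul_comm, Matrix.mul_assoc]
  simpa [Matrix.mul_assoc] using (hB.mul_mul_conjTranspose_same C).trace_nonneg

theorem PosSemidef.mul_eq_zero_of_trace_mul_eq_zero {A B : Matrix n n 𝕜} (hA : A.PosSemidef)
    (hB : B.PosSemidef) (h : (A * B).trace = 0) : A * B = 0 := by
  classical
  obtain ⟨C, rfl⟩ := hA.exists_eq_conjTranspose_mul_self
  obtain ⟨D, rfl⟩ := hB.exists_eq_conjTranspose_mul_self
  have hDC : D * Cᴴ = 0 := by
    rw [← trace_conjTranspose_mul_self_eq_zero_iff, conjTranspose_mul, conjTranspose_conjTranspose]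
    rwa [Matrix.mul_assoc, trace_mul_comm, Matrix.mul_assoc, Matrix.mul_assoc,
      ← Matrix.mul_assoc C] at h
  have hCD : C * Dᴴ = 0 := by simpa using congr(($hDC)ᴴ)
  rw [Matrix.mul_assoc, ← Matrix.mul_assoc C, hCD, Matrix.zero_mul, Matrix.mul_zero]

theorem IsHermitian.posSemidef_sub_smul_one [DecidableEq n] {H : Matrix n n 𝕜}
    (hH : H.IsHermitian) {E₀ : ℝ}
    (hE₀ : ∀ (μ : ℝ) (v : n → 𝕜), v ≠ 0 → H *ᵥ v = (μ : 𝕜) • v → E₀ ≤ μ) :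
    (H - (E₀ : 𝕜) • 1).PosSemidef := by
  have hK : (H - (E₀ : 𝕜) • 1).IsHermitian :=
    hH.sub (isHermitian_one.smul (RCLike.conj_ofReal E₀))
  refine hK.posSemidef_iff_eigenvalues_nonneg.mpr fun i => ?_
  set v : n → 𝕜 := ⇑(hK.eigenvectorBasis i)
  have hv : v ≠ 0 := fun h =>
    hK.eigenvectorBasis.orthonormal.ne_zero i (by ext j; exact congr_fun h j)
  have hHv : H *ᵥ v = ((hK.eigenvalues i + E₀ : ℝ) : 𝕜) • v := by
    have hKv := hK.mulVec_eigenvectorBasis i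
    rw [sub_mulVec, smul_mulVec, one_mulVec, sub_eq_iff_eq_add,
      RCLike.real_smul_eq_coe_smul (K := 𝕜)] at hKv
    rw [hKv, RCLike.ofReal_add, add_smul]
  simpa using hE₀ _ v hv hHv

theorem trace_mul_commutator_nonneg_of_mul_eq_zero {K ρ : Matrix n n 𝕜} (hK : K.PosSemidef)
    (hρ : ρ.PosSemidef) (hKρ : K * ρ = 0) (A : Matrix n n 𝕜) :
    0 ≤ (ρ * Aᴴ * (K * A - A * K)).trace := by
  have hcross : (ρ * Aᴴ * (A * K)).trace = 0 := by
    rw [← Matrix.mul_assoc, trace_mul_comm, ← Matrix.mul_assoc, ← Matrix.mul_assoc, hKρ,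
      Matrix.zero_mul, Matrix.zero_mul, trace_zero]
  rw [Matrix.mul_sub, trace_sub, hcross, sub_zero, Matrix.mul_assoc, ← Matrix.mul_assoc Aᴴ]
  exact hρ.trace_mul_nonneg (hK.conjTranspose_mul_mul_same A)

theorem mul_eq_zero_of_trace_mul_commutator_nonneg {K ρ : Matrix n n 𝕜} (hK : K.PosSemidef)
    (hρ : ρ.PosSemidef) {x : n → 𝕜} (hx : x ≠ 0) (hKx : K *ᵥ x = 0)
    (h : ∀ A : Matrix n n 𝕜, 0 ≤ (ρ * Aᴴ * (K * A - A * K)).trace) : K * ρ = 0 := by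
  classical
  have hc : 0 < star x ⬝ᵥ x := dotProduct_star_self_pos_iff.mpr hx
  have hdiag (i : n) : 0 ≤ -((star x ⬝ᵥ x) * (K * ρ) i i) := by
    set A := vecMulVec x (Pi.single i 1)
    have hKA : K * A = 0 := by rw [mul_vecMulVec, hKx, zero_vecMulVec]
    have hAA : Aᴴ * A = (star x ⬝ᵥ x) • single i i 1 := by
      rw [conjTranspose_vecMulVec, vecMulVec_mul_vecMulVec, vecMulVec_smul,
        single_eq_single_vecMulVec_single]
      simp
    have hA := h A
    rwa [hKA, zero_sub, Matrix.mul_neg, trace_neg, ← Matrix.mul_assoc, trace_mul_comm,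
      Matrix.mul_assoc, hAA, ← Matrix.mul_assoc, Matrix.mul_smul, trace_smul, trace_mul_single,
      op_smul_eq_mul, mul_one, smul_eq_mul] at hA
  have htr : (star x ⬝ᵥ x) * (K * ρ).trace = 0 := by
    have hsum := Finset.sum_nonneg fun i (_ : i ∈ Finset.univ) => hdiag i
    rw [Finset.sum_neg_distrib, ← Finset.mul_sum, neg_nonneg] at hsum
    exact le_antisymm hsum (mul_nonneg hc.le (hK.trace_mul_nonneg hρ))
  exact hK.mul_eq_zero_of_trace_mul_eq_zero hρ ((mul_eq_zero.mp htr).resolve_left hc.ne')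

theorem forall_trace_mul_commutator_nonneg_iff {K ρ : Matrix n n 𝕜} (hK : K.PosSemidef)
    (hρ : ρ.PosSemidef) {x : n → 𝕜} (hx : x ≠ 0) (hKx : K *ᵥ x = 0) :
    (∀ A : Matrix n n 𝕜, 0 ≤ (ρ * Aᴴ * (K * A - A * K)).trace) ↔ K * ρ = 0 :=
  ⟨mul_eq_zero_of_trace_mul_commutator_nonneg hK hρ hx hKx,
    trace_mul_commutator_nonneg_of_mul_eq_zero hK hρ⟩

end Matrix

theorem ground_state_iff_support_general {n : ℕ}
    (H ρ : Matrix (Fin n) (Fin n) ℂ) (hH : H.IsHermitian) (E₀ : ℝ)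
    (hE₀ : ∃ v : Fin n → ℂ, v ≠ 0 ∧ H.mulVec v = (E₀ : ℂ) • v)
    (hE₀min : ∀ (μ : ℝ) (v : Fin n → ℂ), v ≠ 0 → H.mulVec v = (μ : ℂ) • v → E₀ ≤ μ)
    (hρ : ρ.PosSemidef) :
    (∀ A : Matrix (Fin n) (Fin n) ℂ,
        0 ≤ (ρ * Aᴴ * (H * A - A * H)).trace) ↔ H * ρ = (E₀ : ℂ) • ρ := by
  obtain ⟨x, hx, hHx⟩ := hE₀
  have hKx : (H - (E₀ : ℂ) • 1) *ᵥ x = 0 := by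
    rw [sub_mulVec, smul_mulVec, one_mulVec, hHx, sub_self]
  calc (∀ A : Matrix (Fin n) (Fin n) ℂ, 0 ≤ (ρ * Aᴴ * (H * A - A * H)).trace)
      ↔ ∀ A : Matrix (Fin n) (Fin n) ℂ, 0 ≤ (ρ * Aᴴ *
          ((H - (E₀ : ℂ) • 1) * A - A * (H - (E₀ : ℂ) • 1))).trace := by
        simp only [Matrix.sub_mul, Matrix.mul_sub, Matrix.smul_mul, Matrix.mul_smul,
          Matrix.one_mul, Matrix.mul_one, sub_sub_sub_cancel_right]
    _ ↔ (H - (E₀ : ℂ) • 1) * ρ = 0 :=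
        forall_trace_mul_commutator_nonneg_iff (hH.posSemidef_sub_smul_one hE₀min) hρ hx hKx
    _ ↔ H * ρ = (E₀ : ℂ) • ρ := by
        rw [Matrix.sub_mul, Matrix.smul_mul, Matrix.one_mul, sub_eq_zero]

/-- A density matrix `ρ` is a ground state of a Hermitian `H` with smallest
eigenvalue `E₀` (i.e. `Tr(ρ A* (HA - AH)) ≥ 0` for all `A`) iff `H ρ = E₀ ρ`. -/
theorem ground_state_iff_support {n : ℕ} (hn : 1 ≤ n)
    (H ρ : Matrix (Fin n) (Fin n) ℂ) (hH : H.IsHermitian) (E₀ : ℝ)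
    (hE₀ : ∃ v : Fin n → ℂ, v ≠ 0 ∧ H.mulVec v = (E₀ : ℂ) • v)
    (hE₀min : ∀ (μ : ℝ) (v : Fin n → ℂ), v ≠ 0 → H.mulVec v = (μ : ℂ) • v → E₀ ≤ μ)
    (hρ : ρ.PosSemidef) (htr : ρ.trace = 1) :
    (∀ A : Matrix (Fin n) (Fin n) ℂ,
        0 ≤ (ρ * Aᴴ * (H * A - A * H)).trace) ↔ H * ρ = (E₀ : ℂ) • ρ :=
  ground_state_iff_support_general H ρ hH E₀ hE₀ hE₀min hρ
end

section
/- Let n ≥ 1, let H be a Hermitian n×n complex matrix with smallest eigenvalue E₀, and let ρ be a density matrix (positive semidefinite with trace 1) such that for every n×n complex matrix A the trace Tr(ρ · A* · (H·A − A·H)) is a nonnegative real number. Then for every eigenvector η of H with eigenvalue E > E₀ one has ⟨η, ρ η⟩ = 0. (In the proof one takes a unit eigenvector ξ with Hξ = E₀ξ and the rank-one matrix A sending ζ to ⟨η,ζ⟩ξ, for which −i Tr(ρ A* i[H,A]) = (E₀ − E)⟨η, ρ η⟩.) -/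
open Matrix
open scoped ComplexOrder

/-!
Test the ground-state inequality on `A = ξ η*`, where `H ξ = E₀ ξ`. Since `η* H = E η*`, the
commutator is `[H, A] = (E₀ - E) A`, and the inequality becomes `(E₀ - E) ‖ξ‖² ⟨η, ρ η⟩ ≥ 0`.
As `⟨η, ρ η⟩ ≥ 0` and `E₀ - E < 0`, this forces `⟨η, ρ η⟩ = 0`.
-/

namespace Matrix

variable {ι R : Type*} [Fintype ι] [CommRing R] [StarRing R]

theorem IsHermitian.star_vecMul_eq_smul_of_mulVec_eq_smul {H : Matrix ι ι R} (hH : H.IsHermitian)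
    {μ : R} (hμ : IsSelfAdjoint μ) {v : ι → R} (hv : H *ᵥ v = μ • v) :
    star v ᵥ* H = μ • star v :=
  calc star v ᵥ* H = star v ᵥ* Hᴴ := by rw [hH.eq]
    _ = star (H *ᵥ v) := (star_mulVec H v).symm
    _ = μ • star v := by rw [hv, star_smul, hμ.star_eq]

theorem trace_mul_conjTranspose_mul_commutator_vecMulVec (ρ H : Matrix ι ι R) {ξ η : ι → R}
    {a b : R} (hξ : H *ᵥ ξ = a • ξ) (hη : star η ᵥ* H = b • star η) :
    (ρ * (vecMulVec ξ (star η))ᴴ *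
        (H * vecMulVec ξ (star η) - vecMulVec ξ (star η) * H)).trace =
      (a - b) * (star ξ ⬝ᵥ ξ) * (star η ⬝ᵥ ρ *ᵥ η) := by
  have hcomm : H * vecMulVec ξ (star η) - vecMulVec ξ (star η) * H =
      (a - b) • vecMulVec ξ (star η) := by
    rw [mul_vecMulVec, vecMulVec_mul, hξ, hη, smul_vecMulVec, vecMulVec_smul, sub_smul]
  rw [hcomm, conjTranspose_vecMulVec, star_star, Matrix.mul_smul, Matrix.mul_assoc,
    vecMulVec_mul_vecMulVec, vecMulVec_smul, Matrix.mul_smul, mul_vecMulVec, trace_smul,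
    trace_smul, trace_vecMulVec, dotProduct_comm (ρ *ᵥ η), smul_eq_mul, smul_eq_mul, mul_assoc]

end Matrix

theorem ground_state_vanishes_on_excited_general {n : ℕ}
    (H ρ : Matrix (Fin n) (Fin n) ℂ) (hH : H.IsHermitian) (E₀ : ℝ)
    (hE₀ : ∃ v : Fin n → ℂ, v ≠ 0 ∧ H.mulVec v = (E₀ : ℂ) • v)
    (hρ : ρ.PosSemidef)
    (hgs : ∀ A : Matrix (Fin n) (Fin n) ℂ,
        0 ≤ (ρ * Aᴴ * (H * A - A * H)).trace) :
    ∀ (E : ℝ) (η : Fin n → ℂ), E₀ < E → H.mulVec η = (E : ℂ) • η →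
      star η ⬝ᵥ ρ.mulVec η = 0 := by
  intro E η hE hη
  obtain ⟨ξ, hξ0, hξ⟩ := hE₀
  have hgap : ((E₀ : ℂ) - E) * (star ξ ⬝ᵥ ξ) < 0 :=
    mul_neg_of_neg_of_pos (sub_neg.mpr (Complex.real_lt_real.mpr hE))
      (dotProduct_star_self_pos_iff.mpr hξ0)
  have hηleft := hH.star_vecMul_eq_smul_of_mulVec_eq_smul (Complex.conj_ofReal E) hη
  have hρη := hρ.dotProduct_mulVec_nonneg η
  have hineq := hgs (vecMulVec ξ (star η))
  rw [trace_mul_conjTranspose_mul_commutator_vecMulVec ρ H hξ hηleft] at hineq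
  have hzero := le_antisymm (mul_nonpos_of_nonpos_of_nonneg hgap.le hρη) hineq
  exact (mul_eq_zero.mp hzero).resolve_left hgap.ne

/-- If the density matrix `ρ` is a ground state of the Hermitian matrix `H`
(with smallest eigenvalue `E₀`), i.e. `Tr(ρ A* (HA - AH)) ≥ 0` for all `A`,
then `⟨η, ρ η⟩ = 0` for every eigenvector `η` of `H` with eigenvalue `E > E₀`. -/
theorem ground_state_vanishes_on_excited {n : ℕ} (hn : 1 ≤ n)
    (H ρ : Matrix (Fin n) (Fin n) ℂ) (hH : H.IsHermitian) (E₀ : ℝ)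
    (hE₀ : ∃ v : Fin n → ℂ, v ≠ 0 ∧ H.mulVec v = (E₀ : ℂ) • v)
    (hE₀min : ∀ (μ : ℝ) (v : Fin n → ℂ), v ≠ 0 → H.mulVec v = (μ : ℂ) • v → E₀ ≤ μ)
    (hρ : ρ.PosSemidef) (htr : ρ.trace = 1)
    (hgs : ∀ A : Matrix (Fin n) (Fin n) ℂ,
        0 ≤ (ρ * Aᴴ * (H * A - A * H)).trace) :
    ∀ (E : ℝ) (η : Fin n → ℂ), E₀ < E → H.mulVec η = (E : ℂ) • η →
      star η ⬝ᵥ ρ.mulVec η = 0 :=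
  ground_state_vanishes_on_excited_general H ρ hH E₀ hE₀ hρ hgs
end
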